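/- arXiv:2508.14268 — 5 statements merged into one kernel-verified Lean document; each statement's English description precedes it below -/
import Mathlib

section
/- In the linear-model setting, the single-observation dropout statistic satisfies E[D_dr] = β² · E[(X − E[X])²] = β² · E[X̂²]. -/
open MeasureTheory ProbabilityTheory

theorem dropout_mean_linear
    {Ω : Type*} (m𝒢 : MeasurableSpace Ω) (m𝓗 : MeasurableSpace Ω) {mΩ : MeasurableSpace Ω} {P : Measure Ω} [IsProbabilityMeasure P]
    (hm𝒢 : m𝒢 ≤ mΩ)
    (X W ε Y : Ω → ℝ) (β σ2 : ℝ)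
    (hX : Measurable X) (hX4 : MemLp X 4 P)
    (hW : Measurable[m𝒢] W) (hW2 : MemLp W 2 P)
    (hεmeas : Measurable ε) (hε2mem : MemLp ε 2 P)
    (hm𝓗 : m𝓗 = MeasurableSpace.comap X Real.measurableSpace ⊔ m𝒢)
    (hindep : Indep (MeasurableSpace.comap ε Real.measurableSpace) m𝓗 P)
    (hε0 : ∫ ω, ε ω ∂P = 0) (hε2 : ∫ ω, (ε ω) ^ 2 ∂P = σ2)
    (hY : Y = fun ω => β * X ω + W ω + ε ω) :
    ∫ ω, ((Y ω - (β * (∫ ω', X ω' ∂P) + W ω)) ^ 2 - (Y ω - (β * X ω + W ω)) ^ 2) ∂P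
      = β ^ 2 * ∫ ω, (X ω - ∫ ω', X ω' ∂P) ^ 2 ∂P := by
  set μX : ℝ := ∫ ω', X ω' ∂P with hμX
  have hX2 : MemLp X 2 P := hX4.mono_exponent (by norm_num)
  have hXc2 : MemLp (fun ω => X ω - μX) 2 P := hX2.sub (memLp_const μX)
  -- integrability
  have hsq : Integrable (fun ω => (X ω - μX) ^ 2) P := by
    have := hXc2.integrable_sq
    simpa [sq] using this
  -- independence of X - μX and ε
  have hXcmeas : Measurable[MeasurableSpace.comap X Real.measurableSpace]
      (fun ω => X ω - μX) :=
    (Measurable.of_comap_le le_rfl).sub measurable_const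
  have hle : MeasurableSpace.comap (fun ω => X ω - μX) Real.measurableSpace ≤ m𝓗 := by
    refine le_trans ?_ (hm𝓗 ▸ le_sup_left)
    exact hXcmeas.comap_le
  have hIF : IndepFun (fun ω => X ω - μX) ε P := by
    exact indep_of_indep_of_le_left hindep.symm hle
  have hmul : Integrable (fun ω => (X ω - μX) * ε ω) P := by
    have := hIF.integrable_mul (hXc2.integrable one_le_two) (hε2mem.integrable one_le_two)
    exact this
  have hcross : ∫ ω, (X ω - μX) * ε ω ∂P = 0 := by
    have h := hIF.integral_mul_eq_mul_integral (hXc2.aestronglyMeasurable) (hε2mem.aestronglyMeasurable)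
    rw [show (fun ω => (X ω - μX) * ε ω) = (fun ω => X ω - μX) * ε from rfl, h, hε0, mul_zero]
  have heq : ∀ ω, ((Y ω - (β * μX + W ω)) ^ 2 - (Y ω - (β * X ω + W ω)) ^ 2)
      = β ^ 2 * (X ω - μX) ^ 2 + (2 * β) * ((X ω - μX) * ε ω) := by
    intro ω; rw [hY]; ring
  calc ∫ ω, ((Y ω - (β * μX + W ω)) ^ 2 - (Y ω - (β * X ω + W ω)) ^ 2) ∂P
      = ∫ ω, (β ^ 2 * (X ω - μX) ^ 2 + (2 * β) * ((X ω - μX) * ε ω)) ∂P := by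
        simp_rw [heq]
    _ = β ^ 2 * ∫ ω, (X ω - μX) ^ 2 ∂P + (2 * β) * ∫ ω, (X ω - μX) * ε ω ∂P := by
        rw [integral_add (hsq.const_mul _) (hmul.const_mul _), integral_const_mul,
          integral_const_mul]
    _ = β ^ 2 * ∫ ω, (X ω - μX) ^ 2 ∂P := by rw [hcross, mul_zero, add_zero]
end

section
/- In the linear-model setting, the single-observation dropout statistic satisfies Var(D_dr) = β⁴ · Var(X̂²) + 4σ²β² · E[X̂²]. -/
open MeasureTheory ProbabilityTheory
open scoped ENNReal

theorem dropout_variance_linear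
    {Ω : Type*} (m𝒢 : MeasurableSpace Ω) (m𝓗 : MeasurableSpace Ω) {mΩ : MeasurableSpace Ω} {P : Measure Ω} [IsProbabilityMeasure P]
    (hm𝒢 : m𝒢 ≤ mΩ)
    (X W ε Y : Ω → ℝ) (β σ2 : ℝ)
    (hX : Measurable X) (hX4 : MemLp X 4 P)
    (hW : Measurable[m𝒢] W) (hW2 : MemLp W 2 P)
    (hεmeas : Measurable ε) (hε2mem : MemLp ε 2 P)
    (hm𝓗 : m𝓗 = MeasurableSpace.comap X Real.measurableSpace ⊔ m𝒢)
    (hindep : Indep (MeasurableSpace.comap ε Real.measurableSpace) m𝓗 P)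
    (hε0 : ∫ ω, ε ω ∂P = 0) (hε2 : ∫ ω, (ε ω) ^ 2 ∂P = σ2)
    (hY : Y = fun ω => β * X ω + W ω + ε ω) :
    variance (fun ω => (Y ω - (β * (∫ ω', X ω' ∂P) + W ω)) ^ 2
        - (Y ω - (β * X ω + W ω)) ^ 2) P
      = β ^ 4 * variance (fun ω => (X ω - ∫ ω', X ω' ∂P) ^ 2) P
        + 4 * σ2 * β ^ 2 * ∫ ω, (X ω - ∫ ω', X ω' ∂P) ^ 2 ∂P := by
  set μ := ∫ ω', X ω' ∂P with hμ
  set Xh : Ω → ℝ := fun ω => X ω - μ with hXh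
  -- independence of ε and X
  have hle : MeasurableSpace.comap X Real.measurableSpace ≤ m𝓗 := by
    rw [hm𝓗]; exact le_sup_left
  have hεX : IndepFun ε X P := fun t1 t2 h1 h2 => hindep t1 t2 h1 (hle _ h2)
  have hXε : IndepFun X ε P := hεX.symm
  -- measurability
  have hXm : Measurable[mΩ] X := hX
  have hεm : Measurable[mΩ] ε := hεmeas
  have hXhm : Measurable[mΩ] Xh := hXm.sub_const μ
  have hXh4 : MemLp Xh 4 P := hX4.sub (memLp_const μ)
  have hXh2 : MemLp Xh 2 P := hXh4.mono_exponent (by norm_num)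
  -- integrability of powers
  have IXh2 : Integrable (fun ω => Xh ω ^ 2) P :=
    (memLp_two_iff_integrable_sq hXh2.aestronglyMeasurable).1 hXh2
  have IXh4 : Integrable (fun ω => Xh ω ^ 4) P := by
    have := hXh4.integrable_norm_rpow (by norm_num) (by norm_num)
    refine this.congr (Filter.Eventually.of_forall fun ω => ?_)
    show ‖Xh ω‖ ^ (4:ℝ≥0∞).toReal = Xh ω ^ 4
    rw [Real.norm_eq_abs, show ((4:ℝ≥0∞).toReal) = ((4:ℕ):ℝ) by norm_num, Real.rpow_natCast,
      ← abs_pow, abs_of_nonneg (by positivity)]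
  have hXh2mem : MemLp (fun ω => Xh ω ^ 2) 2 P :=
    (memLp_two_iff_integrable_sq (hXhm.pow_const 2).aestronglyMeasurable).2
      (by refine IXh4.congr (Filter.Eventually.of_forall fun ω => ?_); ring_nf)
  have IXh3 : Integrable (fun ω => Xh ω ^ 3) P := by
    refine Integrable.mono' (IXh2.add IXh4) (hXhm.pow_const 3).aestronglyMeasurable
      (Filter.Eventually.of_forall fun ω => ?_)
    rw [Real.norm_eq_abs, abs_pow]
    rcases le_or_gt (|Xh ω|) 1 with h | h
    · calc |Xh ω| ^ 3 ≤ |Xh ω| ^ 2 := pow_le_pow_of_le_one (abs_nonneg _) h (by norm_num)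
        _ = Xh ω ^ 2 := sq_abs _
        _ ≤ Xh ω ^ 2 + Xh ω ^ 4 := le_add_of_nonneg_right (by positivity)
    · calc |Xh ω| ^ 3 ≤ |Xh ω| ^ 4 := pow_le_pow_right₀ h.le (by norm_num)
        _ = Xh ω ^ 4 := by rw [← abs_pow, abs_of_nonneg (by positivity)]
        _ ≤ Xh ω ^ 2 + Xh ω ^ 4 := le_add_of_nonneg_left (by positivity)
  have Iε : Integrable ε P := hε2mem.integrable (by norm_num)
  have Iε2 : Integrable (fun ω => ε ω ^ 2) P :=
    (memLp_two_iff_integrable_sq hε2mem.aestronglyMeasurable).1 hε2mem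
  have IXh : Integrable Xh P := hXh2.integrable (by norm_num)
  -- independence of transformed variables
  have ind22 : IndepFun (fun ω => Xh ω ^ 2) (fun ω => ε ω ^ 2) P :=
    hXε.comp (measurable_id.sub_const μ |>.pow_const 2) (measurable_id.pow_const 2)
  have ind31 : IndepFun (fun ω => Xh ω ^ 3) ε P :=
    hXε.comp (measurable_id.sub_const μ |>.pow_const 3) measurable_id
  have ind11 : IndepFun Xh ε P :=
    hXε.comp (measurable_id.sub_const μ) measurable_id
  -- product integrals
  have E22 : ∫ ω, Xh ω ^ 2 * ε ω ^ 2 ∂P = (∫ ω, Xh ω ^ 2 ∂P) * σ2 := by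
    have := ind22.integral_mul_eq_mul_integral (hXhm.pow_const 2).aestronglyMeasurable
      (hεm.pow_const 2).aestronglyMeasurable
    simpa [hε2] using this
  have E31 : ∫ ω, Xh ω ^ 3 * ε ω ∂P = 0 := by
    have := ind31.integral_mul_eq_mul_integral (hXhm.pow_const 3).aestronglyMeasurable
      hεm.aestronglyMeasurable
    simpa [hε0] using this
  have E11 : ∫ ω, Xh ω * ε ω ∂P = 0 := by
    have := ind11.integral_mul_eq_mul_integral hXhm.aestronglyMeasurable hεm.aestronglyMeasurable
    simpa [hε0] using this
  have I22 : Integrable (fun ω => Xh ω ^ 2 * ε ω ^ 2) P := ind22.integrable_mul IXh2 Iε2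
  have I31 : Integrable (fun ω => Xh ω ^ 3 * ε ω) P := ind31.integrable_mul IXh3 Iε
  have I11 : Integrable (fun ω => Xh ω * ε ω) P := ind11.integrable_mul IXh Iε
  -- rewrite D
  have hD : (fun ω => (Y ω - (β * μ + W ω)) ^ 2 - (Y ω - (β * X ω + W ω)) ^ 2)
      = fun ω => β ^ 2 * Xh ω ^ 2 + 2 * β * (Xh ω * ε ω) := by
    funext ω; rw [hY]; simp only [hXh]; ring
  rw [hD]
  -- MemLp of D
  have ID2 : Integrable (fun ω => (β ^ 2 * Xh ω ^ 2 + 2 * β * (Xh ω * ε ω)) ^ 2) P := by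
    have : (fun ω => (β ^ 2 * Xh ω ^ 2 + 2 * β * (Xh ω * ε ω)) ^ 2)
        = fun ω => β ^ 4 * Xh ω ^ 4 + 4 * β ^ 3 * (Xh ω ^ 3 * ε ω)
            + 4 * β ^ 2 * (Xh ω ^ 2 * ε ω ^ 2) := by funext ω; ring
    rw [this]
    exact ((IXh4.const_mul _).add (I31.const_mul _)).add (I22.const_mul _)
  have hDmeas : AEStronglyMeasurable[mΩ] (fun ω => β ^ 2 * Xh ω ^ 2 + 2 * β * (Xh ω * ε ω)) P :=
    (((hXhm.pow_const 2).const_mul _).add ((hXhm.mul hεm).const_mul _)).aestronglyMeasurable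
  have hD2 : MemLp (fun ω => β ^ 2 * Xh ω ^ 2 + 2 * β * (Xh ω * ε ω)) 2 P :=
    (memLp_two_iff_integrable_sq hDmeas).2 ID2
  -- compute variance of D
  rw [variance_eq_sub hD2, variance_eq_sub hXh2mem]
  have hED : ∫ ω, (β ^ 2 * Xh ω ^ 2 + 2 * β * (Xh ω * ε ω)) ∂P
      = β ^ 2 * ∫ ω, Xh ω ^ 2 ∂P := by
    rw [integral_add (IXh2.const_mul _) (I11.const_mul _), integral_const_mul,
      integral_const_mul, E11]
    ring
  have hED2 : ∫ ω, (β ^ 2 * Xh ω ^ 2 + 2 * β * (Xh ω * ε ω)) ^ 2 ∂P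
      = β ^ 4 * ∫ ω, Xh ω ^ 4 ∂P + 4 * β ^ 2 * ((∫ ω, Xh ω ^ 2 ∂P) * σ2) := by
    have h1 : (fun ω => (β ^ 2 * Xh ω ^ 2 + 2 * β * (Xh ω * ε ω)) ^ 2)
        = fun ω => β ^ 4 * Xh ω ^ 4 + 4 * β ^ 3 * (Xh ω ^ 3 * ε ω)
            + 4 * β ^ 2 * (Xh ω ^ 2 * ε ω ^ 2) := by funext ω; ring
    have Ia : Integrable (fun ω => β ^ 4 * Xh ω ^ 4 + 4 * β ^ 3 * (Xh ω ^ 3 * ε ω)) P :=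
      (IXh4.const_mul _).add (I31.const_mul _)
    rw [h1, integral_add Ia (I22.const_mul _),
      integral_add (IXh4.const_mul _) (I31.const_mul _), integral_const_mul,
      integral_const_mul, integral_const_mul, E31, E22]
    ring
  have h44 : ∫ x, (Xh x ^ 2) ^ 2 ∂P = ∫ ω, Xh ω ^ 4 ∂P := by
    congr 1; funext x; ring
  simp only [Pi.pow_apply]
  rw [hED, hED2, h44]
  ring
end

section
/- In the non-linear additive model setting, the single-observation dropout statistic satisfies E[D_dr] = Var(f(X)) + (E[f(X)] − f(μ))², where μ := E[X]. -/
open MeasureTheory ProbabilityTheory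

theorem dropout_mean_additive
    {Ω : Type*} (m𝒢 : MeasurableSpace Ω) (m𝓗 : MeasurableSpace Ω) {mΩ : MeasurableSpace Ω} {P : Measure Ω} [IsProbabilityMeasure P]
    (hm𝒢 : m𝒢 ≤ mΩ)
    (X W ε Y : Ω → ℝ) (f : ℝ → ℝ) (σ2 : ℝ)
    (hX : Measurable X) (hX4 : MemLp X 4 P)
    (hf : Measurable f) (hf4 : MemLp (fun ω => f (X ω)) 4 P)
    (hW : Measurable[m𝒢] W) (hW2 : MemLp W 2 P)
    (hεmeas : Measurable ε) (hε2mem : MemLp ε 2 P)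
    (hm𝓗 : m𝓗 = MeasurableSpace.comap X Real.measurableSpace ⊔ m𝒢)
    (hindep : Indep (MeasurableSpace.comap ε Real.measurableSpace) m𝓗 P)
    (hε0 : ∫ ω, ε ω ∂P = 0) (hε2 : ∫ ω, (ε ω) ^ 2 ∂P = σ2)
    (hY : Y = fun ω => f (X ω) + W ω + ε ω) :
    ∫ ω, ((Y ω - (f (∫ ω', X ω' ∂P) + W ω)) ^ 2 - (Y ω - (f (X ω) + W ω)) ^ 2) ∂P
      = variance (fun ω => f (X ω)) P
        + ((∫ ω, f (X ω) ∂P) - f (∫ ω', X ω' ∂P)) ^ 2 := by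
  subst hY
  set c : ℝ := f (∫ ω', X ω' ∂P) with hc
  set g : Ω → ℝ := fun ω => f (X ω) with hg
  have hg2 : MemLp g 2 P := hf4.mono_exponent (by norm_num)
  have hgc2 : MemLp (fun ω => g ω - c) 2 P := hg2.sub (memLp_const c)
  have hgint : Integrable g P := hg2.integrable one_le_two
  have hgcint : Integrable (fun ω => g ω - c) P := hgc2.integrable one_le_two
  have hεint : Integrable ε P := hε2mem.integrable one_le_two
  have hgcsq : Integrable (fun ω => (g ω - c) ^ 2) P := by
    simpa [sq] using hgc2.integrable_sq
  have hgsq : Integrable (fun ω => g ω ^ 2) P := by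
    simpa [sq] using hg2.integrable_sq
  have hmul : Integrable (fun ω => (g ω - c) * ε ω) P := by
    have h := (hε2mem.smul (𝕜 := ℝ) hgc2 (r := 1)).integrable le_rfl
    exact h
  -- independence of ε and g - c
  have hle : MeasurableSpace.comap (fun ω => g ω - c) Real.measurableSpace ≤ m𝓗 := by
    have h1 : Measurable (fun x : ℝ => f x - c) := hf.sub measurable_const
    have h2 : MeasurableSpace.comap (fun ω => g ω - c) Real.measurableSpace
        = MeasurableSpace.comap X
            (MeasurableSpace.comap (fun x : ℝ => f x - c) Real.measurableSpace) := by
      exact (MeasurableSpace.comap_comp (f := fun x : ℝ => f x - c) (g := X)).symm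
    rw [h2, hm𝓗]
    refine le_trans ?_ le_sup_left
    exact MeasurableSpace.comap_mono h1.comap_le
  have hIndep : IndepFun ε (fun ω => g ω - c) P := indep_of_indep_of_le_right hindep hle
  have hzero : ∫ ω, (g ω - c) * ε ω ∂P = 0 := by
    have h := hIndep.symm.integral_mul_eq_mul_integral hgcint.aestronglyMeasurable hεint.aestronglyMeasurable
    simp only [Pi.mul_apply] at h
    rw [h, hε0, mul_zero]
  -- rewrite the integrand
  have hEq : ∀ ω, ((g ω + W ω + ε ω - (c + W ω)) ^ 2 - (g ω + W ω + ε ω - (g ω + W ω)) ^ 2)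
      = (g ω - c) ^ 2 + 2 * ((g ω - c) * ε ω) := fun ω => by ring
  rw [integral_congr_ae (Filter.Eventually.of_forall hEq),
    integral_add hgcsq (hmul.const_mul 2), integral_const_mul, hzero, mul_zero, add_zero]
  -- expand (g - c)^2 and use variance_eq_sub
  have hexp : ∀ ω, (g ω - c) ^ 2 = g ω ^ 2 - 2 * c * g ω + c ^ 2 := fun ω => by ring
  rw [integral_congr_ae (Filter.Eventually.of_forall hexp)]
  have h4 : Integrable (fun ω => g ω ^ 2 - 2 * c * g ω) P := hgsq.sub (hgint.const_mul (2 * c))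
  rw [integral_add h4 (integrable_const _),
    integral_sub hgsq (hgint.const_mul (2 * c)), integral_const_mul, integral_const]
  have hvar : variance g P = (∫ ω, g ω ^ 2 ∂P) - (∫ ω, g ω ∂P) ^ 2 := by
    have := variance_eq_sub hg2
    simpa [sq] using this
  simp only [measure_univ, probReal_univ, ENNReal.toReal_one, smul_eq_mul, one_mul]
  rw [hvar]; ring
end

section
/- In the non-linear additive model setting, write f̂ := f(X) − E[f(X)] and a := E[f(X)] − f(μ) with μ := E[X], and assume additionally that the third central moment vanishes: E[f̂³] = 0. Then the single-observation dropout statistic satisfies Var(D_dr) = Var(f̂²) + 4σ² · E[f̂²] + 4a² · (Var(f(X)) + σ²). -/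
open MeasureTheory ProbabilityTheory

lemma ennreal_half : (1:ENNReal)/2 = 1/4 + 1/4 := by
  rw [ENNReal.div_add_div_same,
    ENNReal.div_eq_div_iff (by norm_num) (by norm_num) (by norm_num) (by norm_num)]
  norm_num

lemma ennreal_one : (1:ENNReal)/1 = 1/2 + 1/2 := by
  rw [ENNReal.div_add_div_same,
    ENNReal.div_eq_div_iff (by norm_num) (by norm_num) (by norm_num) (by norm_num)]
  norm_num

theorem dropout_variance_additive
    {Ω : Type*} (m𝒢 : MeasurableSpace Ω) (m𝓗 : MeasurableSpace Ω) {mΩ : MeasurableSpace Ω} {P : Measure Ω} [IsProbabilityMeasure P]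
    (hm𝒢 : m𝒢 ≤ mΩ)
    (X W ε Y : Ω → ℝ) (f : ℝ → ℝ) (σ2 : ℝ)
    (hX : Measurable X) (hX4 : MemLp X 4 P)
    (hf : Measurable f) (hf4 : MemLp (fun ω => f (X ω)) 4 P)
    (hW : Measurable[m𝒢] W) (hW2 : MemLp W 2 P)
    (hεmeas : Measurable ε) (hε2mem : MemLp ε 2 P)
    (hm𝓗 : m𝓗 = MeasurableSpace.comap X Real.measurableSpace ⊔ m𝒢)
    (hindep : Indep (MeasurableSpace.comap ε Real.measurableSpace) m𝓗 P)
    (hε0 : ∫ ω, ε ω ∂P = 0) (hε2 : ∫ ω, (ε ω) ^ 2 ∂P = σ2)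
    (hY : Y = fun ω => f (X ω) + W ω + ε ω)
    (fhat : Ω → ℝ) (a : ℝ)
    (hfhat : fhat = fun ω => f (X ω) - ∫ ω', f (X ω') ∂P)
    (ha : a = (∫ ω, f (X ω) ∂P) - f (∫ ω', X ω' ∂P))
    (hskew : ∫ ω, (fhat ω) ^ 3 ∂P = 0) :
    variance (fun ω =>
        (Y ω - (f (∫ ω', X ω' ∂P) + W ω)) ^ 2 - (Y ω - (f (X ω) + W ω)) ^ 2) P
      = variance (fun ω => (fhat ω) ^ 2) P
        + 4 * σ2 * (∫ ω, (fhat ω) ^ 2 ∂P)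
        + 4 * a ^ 2 * (variance (fun ω => f (X ω)) P + σ2) := by
  set μ0 := ∫ ω', X ω' ∂P with hμ0
  set m := ∫ ω', f (X ω') ∂P with hmdef
  set g : Ω → ℝ := fun ω => f (X ω) - m with hgdef
  set h : Ω → ℝ := fun ω => f (X ω) - f μ0 with hhdef
  have hfhatg : fhat = g := hfhat
  -- basic Memℒp facts
  have hF4 : MemLp (fun ω => f (X ω)) 4 P := hf4
  have hg4 : MemLp g 4 P := hF4.sub (memLp_const m)
  have hh4 : MemLp h 4 P := hF4.sub (memLp_const (f μ0))
  have hg2 : MemLp g 2 P := hg4.mono_exponent (by norm_num)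
  have hh2 : MemLp h 2 P := hh4.mono_exponent (by norm_num)
  have hF2 : MemLp (fun ω => f (X ω)) 2 P := hF4.mono_exponent (by norm_num)
  -- squares in L^2
  have hgsq2 : MemLp (fun ω => g ω ^ 2) 2 P := by
    have := hg4.smul (φ := g) hg4 (hpqr := ⟨by simp only [inv_eq_one_div]; exact ennreal_half.symm⟩)
    convert this using 1
    funext ω; simp [Pi.smul_apply, smul_eq_mul, sq]
  have hhsq2 : MemLp (fun ω => h ω ^ 2) 2 P := by
    have := hh4.smul (φ := h) hh4 (hpqr := ⟨by simp only [inv_eq_one_div]; exact ennreal_half.symm⟩)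
    convert this using 1
    funext ω; simp [Pi.smul_apply, smul_eq_mul, sq]
  -- integrability of powers
  have hIF : Integrable (fun ω => f (X ω)) P := hF2.integrable one_le_two
  have hIF2 : Integrable (fun ω => (f (X ω)) ^ 2) P := by
    have := (memLp_two_iff_integrable_sq hF2.aestronglyMeasurable).1 hF2
    simpa [Pi.pow_apply] using this
  have hIg : Integrable g P := hg2.integrable one_le_two
  have hIh : Integrable h P := hh2.integrable one_le_two
  have hIg2 : Integrable (fun ω => g ω ^ 2) P := by
    have := (memLp_two_iff_integrable_sq hg2.aestronglyMeasurable).1 hg2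
    simpa [Pi.pow_apply] using this
  have hIh2 : Integrable (fun ω => h ω ^ 2) P := by
    have := (memLp_two_iff_integrable_sq hh2.aestronglyMeasurable).1 hh2
    simpa [Pi.pow_apply] using this
  have hIg3 : Integrable (fun ω => g ω ^ 3) P := by
    have hthis := (hg2.smul (φ := fun ω => g ω ^ 2) hgsq2 (hpqr := ⟨by simp only [inv_eq_one_div]; exact ennreal_one.symm⟩)).integrable le_rfl
    have h2 : (fun ω => g ω ^ 3) = (fun ω => g ω ^ 2) • g := by
      funext ω; simp [Pi.smul_apply, smul_eq_mul, pow_succ]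
    rw [h2]; exact hthis
  have hIh3 : Integrable (fun ω => h ω ^ 3) P := by
    have hthis := (hh2.smul (φ := fun ω => h ω ^ 2) hhsq2 (hpqr := ⟨by simp only [inv_eq_one_div]; exact ennreal_one.symm⟩)).integrable le_rfl
    have h2 : (fun ω => h ω ^ 3) = (fun ω => h ω ^ 2) • h := by
      funext ω; simp [Pi.smul_apply, smul_eq_mul, pow_succ]
    rw [h2]; exact hthis
  have hIg4 : Integrable (fun ω => g ω ^ 4) P := by
    have := (memLp_two_iff_integrable_sq hgsq2.aestronglyMeasurable).1 hgsq2
    have h2 : (fun ω => g ω ^ 4) = ((fun ω => g ω ^ 2) ^ 2) := by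
      funext ω; simp [Pi.pow_apply]; ring
    rw [h2]; exact this
  have hIh4 : Integrable (fun ω => h ω ^ 4) P := by
    have := (memLp_two_iff_integrable_sq hhsq2.aestronglyMeasurable).1 hhsq2
    have h2 : (fun ω => h ω ^ 4) = ((fun ω => h ω ^ 2) ^ 2) := by
      funext ω; simp [Pi.pow_apply]; ring
    rw [h2]; exact this
  have hIε : Integrable ε P := hε2mem.integrable one_le_two
  have hIε2 : Integrable (fun ω => ε ω ^ 2) P := by
    have := (memLp_two_iff_integrable_sq hε2mem.aestronglyMeasurable).1 hε2mem
    simpa [Pi.pow_apply] using this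
  -- independence of h and ε
  have hXm : Measurable[m𝓗] X := by
    rw [measurable_iff_comap_le, hm𝓗]; exact le_sup_left
  have hhm : Measurable[m𝓗] h := (hf.sub measurable_const).comp hXm
  have hIndhε : IndepFun h ε P := by
    have h1 : MeasurableSpace.comap h Real.measurableSpace ≤ m𝓗 :=
      measurable_iff_comap_le.1 hhm
    exact (indep_of_indep_of_le_right hindep h1).symm
  have hInd_h3ε : IndepFun (fun ω => h ω ^ 3) ε P :=
    hIndhε.comp (measurable_id.pow_const 3) measurable_id
  have hInd_h2ε2 : IndepFun (fun ω => h ω ^ 2) (fun ω => ε ω ^ 2) P :=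
    hIndhε.comp (measurable_id.pow_const 2) (measurable_id.pow_const 2)
  -- product integrals
  have hEhε : ∫ ω, h ω * ε ω ∂P = (∫ ω, h ω ∂P) * ∫ ω, ε ω ∂P :=
    hIndhε.integral_mul_eq_mul_integral hh2.aestronglyMeasurable hε2mem.aestronglyMeasurable
  have hEh3ε : ∫ ω, h ω ^ 3 * ε ω ∂P = (∫ ω, h ω ^ 3 ∂P) * ∫ ω, ε ω ∂P :=
    hInd_h3ε.integral_mul_eq_mul_integral hIh3.aestronglyMeasurable hε2mem.aestronglyMeasurable
  have hEh2ε2 : ∫ ω, h ω ^ 2 * ε ω ^ 2 ∂P = (∫ ω, h ω ^ 2 ∂P) * ∫ ω, ε ω ^ 2 ∂P :=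
    hInd_h2ε2.integral_mul_eq_mul_integral hIh2.aestronglyMeasurable hIε2.aestronglyMeasurable
  -- product integrabilities
  have hIhε : Integrable (fun ω => h ω * ε ω) P := by
    have := hIndhε.integrable_mul hIh hIε
    exact this
  have hIh3ε : Integrable (fun ω => h ω ^ 3 * ε ω) P := by
    have := hInd_h3ε.integrable_mul hIh3 hIε
    exact this
  have hIh2ε2 : Integrable (fun ω => h ω ^ 2 * ε ω ^ 2) P := by
    have := hInd_h2ε2.integrable_mul hIh2 hIε2
    exact this
  -- basic moments of g
  have hEg : ∫ ω, g ω ∂P = 0 := by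
    rw [hgdef]
    rw [integral_sub hIF (integrable_const m)]
    simp [hmdef]
  have hEg3 : ∫ ω, g ω ^ 3 ∂P = 0 := by rw [← hfhatg]; exact hskew
  have hhga : ∀ ω, h ω = g ω + a := by
    intro ω; rw [hhdef, hgdef, ha]; ring
  set I2 := ∫ ω, g ω ^ 2 ∂P with hI2
  set I4 := ∫ ω, g ω ^ 4 ∂P with hI4
  -- moments of h
  have hEh : ∫ ω, h ω ∂P = a := by
    have : (fun ω => h ω) = fun ω => g ω + a := funext hhga
    rw [show h = fun ω => g ω + a from funext hhga]
    rw [integral_add hIg (integrable_const a)]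
    simp [hEg]
  have hEh2 : ∫ ω, h ω ^ 2 ∂P = I2 + a ^ 2 := by
    have he : (fun ω => h ω ^ 2) = fun ω => g ω ^ 2 + ((2 * a) * g ω + a ^ 2) := by
      funext ω; rw [hhga ω]; ring
    have i1 : Integrable (fun ω => (2 * a) * g ω + a ^ 2) P :=
      (hIg.const_mul (2*a)).add (integrable_const _)
    rw [he, integral_add hIg2 i1,
      integral_add (hIg.const_mul (2*a)) (integrable_const _), integral_const_mul]
    simp [hEg, hI2]
  have hEh4 : ∫ ω, h ω ^ 4 ∂P = I4 + 6 * a ^ 2 * I2 + a ^ 4 := by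
    have he : (fun ω => h ω ^ 4) = fun ω => g ω ^ 4 + ((4 * a) * g ω ^ 3 +
        ((6 * a ^ 2) * g ω ^ 2 + ((4 * a ^ 3) * g ω + a ^ 4))) := by
      funext ω; rw [hhga ω]; ring
    have i1 : Integrable (fun ω => (4 * a ^ 3) * g ω + a ^ 4) P :=
      (hIg.const_mul _).add (integrable_const _)
    have i2 : Integrable (fun ω => (6 * a ^ 2) * g ω ^ 2 + ((4 * a ^ 3) * g ω + a ^ 4)) P :=
      (hIg2.const_mul _).add i1
    have i3 : Integrable (fun ω => (4 * a) * g ω ^ 3 +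
        ((6 * a ^ 2) * g ω ^ 2 + ((4 * a ^ 3) * g ω + a ^ 4))) P :=
      (hIg3.const_mul _).add i2
    rw [he, integral_add hIg4 i3,
      integral_add (hIg3.const_mul _) i2,
      integral_add (hIg2.const_mul _) i1,
      integral_add (hIg.const_mul _) (integrable_const _),
      integral_const_mul, integral_const_mul, integral_const_mul]
    simp [hEg, hEg3]
    ring
  -- the dropout statistic
  have hDfun : (fun ω => (Y ω - (f μ0 + W ω)) ^ 2 - (Y ω - (f (X ω) + W ω)) ^ 2)
      = fun ω => h ω ^ 2 + 2 * (h ω * ε ω) := by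
    funext ω; rw [hY, hhdef]; ring
  rw [hDfun, hfhatg]
  -- Memℒp of D
  have hhε2mem : MemLp (fun ω => h ω * ε ω) 2 P := by
    refine (memLp_two_iff_integrable_sq
      (hh2.aestronglyMeasurable.mul hε2mem.aestronglyMeasurable)).2 ?_
    convert hIh2ε2 using 1
    funext ω; simp [Pi.pow_apply]; ring
  have hD2 : MemLp (fun ω => h ω ^ 2 + 2 * (h ω * ε ω)) 2 P :=
    hhsq2.add (hhε2mem.const_mul 2)
  -- variance computations
  rw [variance_eq_sub hD2, variance_eq_sub hgsq2, variance_eq_sub hF2]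
  have hED : ∫ ω, (h ω ^ 2 + 2 * (h ω * ε ω)) ∂P = I2 + a ^ 2 := by
    have i1 : Integrable (fun ω => 2 * (h ω * ε ω)) P := hIhε.const_mul 2
    rw [integral_add hIh2 i1, integral_const_mul, hEhε, hε0, hEh2]
    ring
  have hED2 : ∫ ω, ((fun ω => h ω ^ 2 + 2 * (h ω * ε ω)) ^ 2) ω ∂P
      = (I4 + 6 * a ^ 2 * I2 + a ^ 4) + 4 * ((I2 + a ^ 2) * σ2) := by
    have he : ((fun ω => h ω ^ 2 + 2 * (h ω * ε ω)) ^ 2)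
        = fun ω => h ω ^ 4 + (4 * (h ω ^ 3 * ε ω) + 4 * (h ω ^ 2 * ε ω ^ 2)) := by
      funext ω; simp [Pi.pow_apply]; ring
    have i1 : Integrable (fun ω => 4 * (h ω ^ 3 * ε ω) + 4 * (h ω ^ 2 * ε ω ^ 2)) P :=
      (hIh3ε.const_mul 4).add (hIh2ε2.const_mul 4)
    rw [he, integral_add hIh4 i1,
      integral_add (hIh3ε.const_mul 4) (hIh2ε2.const_mul 4),
      integral_const_mul, integral_const_mul, hEh3ε, hEh2ε2, hε0, hEh2, hε2, hEh4]
    ring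
  have hEgsq2 : ∫ ω, ((fun ω => g ω ^ 2) ^ 2) ω ∂P = I4 := by
    have he : ((fun ω => g ω ^ 2) ^ 2) = fun ω => g ω ^ 4 := by
      funext ω; simp [Pi.pow_apply]; ring
    rw [he, hI4]
  have hEF2 : ∫ ω, ((fun ω => f (X ω)) ^ 2) ω ∂P = I2 + m ^ 2 := by
    have he : ((fun ω => f (X ω)) ^ 2) = fun ω => g ω ^ 2 + ((2 * m) * g ω + m ^ 2) := by
      funext ω; simp [Pi.pow_apply, hgdef]; ring
    have i1 : Integrable (fun ω => (2 * m) * g ω + m ^ 2) P :=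
      (hIg.const_mul _).add (integrable_const _)
    rw [he, integral_add hIg2 i1,
      integral_add (hIg.const_mul _) (integrable_const _), integral_const_mul]
    simp [hEg, hI2]
  -- put it together
  simp only [hED, hED2, hEgsq2, hEF2]
  rw [← hI2, ← hmdef]
  ring
end

section
/- (Example 1: closed-form asymptotic relative efficiency with a Gaussian residual.) Let Z be a Gaussian random variable with law N(0, τ²), τ > 0, and let ε be a random variable independent of Z with E[ε] = 0 and E[ε²] = σ_ε², where σ_ε² > 0. For β ≠ 0 set T₁ := Z·(βZ + ε) and T₂ := (βZ + ε)² − ε². Then E[T₁] = βτ², Var(T₁) = 2β²τ⁴ + σ_ε²τ², E[T₂] = β²τ², Var(T₂) = 2β⁴τ⁴ + 4σ_ε²β²τ², and consequently the asymptotic relative efficiency [Var(T₂)/(E[T₂])²] / [Var(T₁)/(E[T₁])²] = (4·σ_ε²/β² + 2τ²) / (σ_ε²/β² + 2τ²). -/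
/-! Expanding `T₁ = Z(βZ + ε)` and `T₁²` into monomials `Z^a ε^b`, independence factors every
expectation into a moment of `Z` times a moment of `ε`. The Gaussian moments needed are
`E Z = E Z³ = 0` (symmetry of `N(0, v)`), `E Z² = v` and `E Z⁴ = 3v²` (the Gamma integral
`∫ x^{2k} e^{-x²/2v} dx`); the vanishing odd moments also kill every term containing `E ε`. Since
`T₂ = β · Z(βZ + 2ε)` is `β` times the GCM statistic with residual `2ε`, its mean and variance
follow from those of `T₁`, and the efficiency ratio is then algebra. -/

open MeasureTheory ProbabilityTheory Real
open scoped NNReal Nat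

lemma integral_pow_two_mul_mul_exp_neg_mul_sq {b : ℝ} (hb : 0 < b) (k : ℕ) :
    ∫ x : ℝ, x ^ (2 * k) * exp (-b * x ^ 2) = b ^ (-(k + 1 / 2 : ℝ)) * Gamma (k + 1 / 2) := by
  set f : ℝ → ℝ := fun t ↦ t ^ ((2 * k : ℕ) : ℝ) * exp (-b * t ^ (2 : ℝ))
  have hf : ∀ x, x ^ (2 * k) * exp (-b * x ^ 2) = f |x| := fun x ↦ by
    simp only [f, rpow_natCast, rpow_two, pow_mul, sq_abs]
  have hq : (-1 : ℝ) < (2 * k : ℕ) := by norm_cast; omega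
  rw [funext hf, integral_comp_abs (f := f), integral_rpow_mul_exp_neg_mul_rpow two_pos hq hb]
  push_cast
  ring_nf

namespace ProbabilityTheory

lemma integral_pow_two_mul_gaussianReal (v : ℝ≥0) (k : ℕ) :
    ∫ x, x ^ (2 * k) ∂gaussianReal 0 v = (v : ℝ) ^ k * (2 * k - 1 : ℕ)‼ := by
  rcases eq_or_ne v 0 with rfl | hv
  · cases k <;> simp [gaussianReal_zero_var]
  have h2v : (0 : ℝ) < 2 * v := by positivity
  have hpdf : ∀ x, gaussianPDFReal 0 v x • x ^ (2 * k)
      = (√(2 * π * v))⁻¹ * (x ^ (2 * k) * exp (-(2 * (v : ℝ))⁻¹ * x ^ 2)) := fun x ↦ by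
    rw [gaussianPDFReal, smul_eq_mul, sub_zero]
    ring_nf
  have hscale : ((2 * (v : ℝ))⁻¹) ^ (-(k + 1 / 2 : ℝ)) = (2 * v) ^ k * √(2 * v) := by
    rw [inv_rpow h2v.le, ← rpow_neg h2v.le, neg_neg, rpow_add h2v, rpow_natCast, sqrt_eq_rpow]
  rw [integral_gaussianReal_eq_integral_smul hv, funext hpdf, integral_const_mul,
    integral_pow_two_mul_mul_exp_neg_mul_sq (inv_pos.2 h2v), hscale, Gamma_nat_add_half,
    show 2 * π * v = 2 * v * π by ring, sqrt_mul h2v.le]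
  field_simp
  ring

lemma integral_pow_two_mul_add_one_gaussianReal (v : ℝ≥0) (k : ℕ) :
    ∫ x, x ^ (2 * k + 1) ∂gaussianReal 0 v = 0 := by
  have hsymm : (gaussianReal 0 v).map (fun x ↦ -x) = gaussianReal 0 v := by
    simpa using gaussianReal_map_neg (μ := 0) (v := v)
  have h : ∫ x, x ^ (2 * k + 1) ∂(gaussianReal 0 v).map (fun x ↦ -x)
      = ∫ x, (-x) ^ (2 * k + 1) ∂gaussianReal 0 v :=
    integral_map (by fun_prop) (by fun_prop)
  simp only [hsymm, Odd.neg_pow (odd_two_mul_add_one k), integral_neg] at h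
  linarith

variable {Ω : Type*} {mΩ : MeasurableSpace Ω} {P : Measure Ω} {Z ε : Ω → ℝ}

lemma HasLaw.memLp_of_gaussianReal {μ : ℝ} {v : ℝ≥0} (hZ : HasLaw Z (gaussianReal μ v) P)
    (p : ℝ≥0) : MemLp Z p P := by
  have h := memLp_id_gaussianReal (μ := μ) (v := v) p
  rw [← hZ.map_eq] at h
  exact (memLp_map_measure_iff aestronglyMeasurable_id hZ.aemeasurable).1 h

lemma HasLaw.integral_pow {μ : Measure ℝ} (hZ : HasLaw Z μ P) (n : ℕ) :
    ∫ ω, Z ω ^ n ∂P = ∫ x, x ^ n ∂μ :=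
  hZ.integral_comp (f := fun x ↦ x ^ n) (by fun_prop)

lemma HasLaw.integral_pow_two_gaussianReal {v : ℝ≥0} (hZ : HasLaw Z (gaussianReal 0 v) P) :
    ∫ ω, Z ω ^ 2 ∂P = v := by
  simpa using (hZ.integral_pow (2 * 1)).trans (integral_pow_two_mul_gaussianReal v 1)

lemma HasLaw.integral_pow_three_gaussianReal {v : ℝ≥0} (hZ : HasLaw Z (gaussianReal 0 v) P) :
    ∫ ω, Z ω ^ 3 ∂P = 0 :=
  (hZ.integral_pow (2 * 1 + 1)).trans (integral_pow_two_mul_add_one_gaussianReal v 1)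

lemma HasLaw.integral_pow_four_gaussianReal {v : ℝ≥0} (hZ : HasLaw Z (gaussianReal 0 v) P) :
    ∫ ω, Z ω ^ 4 ∂P = 3 * v ^ 2 := by
  rw [hZ.integral_pow (2 * 2), integral_pow_two_mul_gaussianReal v 2]
  norm_num [Nat.doubleFactorial]
  ring

lemma _root_.MeasureTheory.MemLp.integrable_pow_of_le [IsFiniteMeasure P] {p n : ℕ}
    (hZ : MemLp Z p P) (hn : n ≤ p) : Integrable (fun ω ↦ Z ω ^ n) P := by
  have h := (hZ.mono_exponent (p := n) (by exact_mod_cast hn)).integrable_norm_pow'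
  exact (integrable_norm_iff (hZ.aestronglyMeasurable.pow n)).1
    (by simpa only [Pi.pow_apply, norm_pow] using h)

lemma IndepFun.integrable_pow_mul_pow [IsFiniteMeasure P] (hind : IndepFun Z ε P)
    {p q a b : ℕ} (hZ : MemLp Z p P) (hε : MemLp ε q P) (ha : a ≤ p) (hb : b ≤ q) :
    Integrable (fun ω ↦ Z ω ^ a * ε ω ^ b) P :=
  (hind.comp (measurable_id.pow_const a) (measurable_id.pow_const b)).integrable_mul
    (hZ.integrable_pow_of_le ha) (hε.integrable_pow_of_le hb)

lemma IndepFun.integral_pow_mul_pow (hind : IndepFun Z ε P)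
    (hZ : AEStronglyMeasurable Z P) (hε : AEStronglyMeasurable ε P) (a b : ℕ) :
    ∫ ω, Z ω ^ a * ε ω ^ b ∂P = (∫ ω, Z ω ^ a ∂P) * ∫ ω, ε ω ^ b ∂P :=
  (hind.comp (measurable_id.pow_const a)
    (measurable_id.pow_const b)).integral_fun_mul_eq_mul_integral (hZ.pow a) (hε.pow b)

section Polynomial

variable [IsFiniteMeasure P] {p q : ℕ} {ι : Type*} {s : Finset ι} {c : ι → ℝ} {a b : ι → ℕ}

lemma IndepFun.integrable_sum_mul_pow_mul_pow (hind : IndepFun Z ε P) (hZ : MemLp Z p P)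
    (hε : MemLp ε q P) (ha : ∀ i ∈ s, a i ≤ p) (hb : ∀ i ∈ s, b i ≤ q) :
    Integrable (fun ω ↦ ∑ i ∈ s, c i * (Z ω ^ a i * ε ω ^ b i)) P :=
  integrable_finsetSum s fun i hi ↦
    (hind.integrable_pow_mul_pow hZ hε (ha i hi) (hb i hi)).const_mul (c i)

lemma IndepFun.integral_sum_mul_pow_mul_pow (hind : IndepFun Z ε P) (hZ : MemLp Z p P)
    (hε : MemLp ε q P) (ha : ∀ i ∈ s, a i ≤ p) (hb : ∀ i ∈ s, b i ≤ q) :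
    ∫ ω, ∑ i ∈ s, c i * (Z ω ^ a i * ε ω ^ b i) ∂P
      = ∑ i ∈ s, c i * ((∫ ω, Z ω ^ a i ∂P) * ∫ ω, ε ω ^ b i ∂P) := by
  rw [integral_finsetSum s fun i hi ↦
    (hind.integrable_pow_mul_pow hZ hε (ha i hi) (hb i hi)).const_mul (c i)]
  simp only [integral_const_mul, hind.integral_pow_mul_pow hZ.1 hε.1]

end Polynomial

def gcmStat (β : ℝ) (Z ε : Ω → ℝ) : Ω → ℝ := fun ω ↦ Z ω * (β * Z ω + ε ω)

lemma gcmStat_eq_sum (β : ℝ) (ω : Ω) :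
    gcmStat β Z ε ω = ∑ i : Fin 2, ![β, 1] i * (Z ω ^ ![2, 1] i * ε ω ^ ![0, 1] i) := by
  simp [gcmStat, Fin.sum_univ_succ]
  ring

lemma gcmStat_sq_eq_sum (β : ℝ) (ω : Ω) :
    gcmStat β Z ε ω ^ 2
      = ∑ i : Fin 3, ![β ^ 2, 2 * β, 1] i * (Z ω ^ ![4, 3, 2] i * ε ω ^ ![0, 1, 2] i) := by
  simp [gcmStat, Fin.sum_univ_succ]
  ring

variable [IsProbabilityMeasure P]

lemma integral_gcmStat (hind : IndepFun Z ε P) (hZ : MemLp Z 4 P) (hε : MemLp ε 2 P) (β : ℝ) :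
    ∫ ω, gcmStat β Z ε ω ∂P = β * ∫ ω, Z ω ^ 2 ∂P + (∫ ω, Z ω ∂P) * ∫ ω, ε ω ∂P := by
  simp only [gcmStat_eq_sum]
  rw [hind.integral_sum_mul_pow_mul_pow hZ hε (by decide) (by decide)]
  simp [Fin.sum_univ_succ]

lemma integral_gcmStat_sq (hind : IndepFun Z ε P) (hZ : MemLp Z 4 P) (hε : MemLp ε 2 P)
    (β : ℝ) :
    ∫ ω, gcmStat β Z ε ω ^ 2 ∂P = β ^ 2 * ∫ ω, Z ω ^ 4 ∂P
      + 2 * β * (∫ ω, Z ω ^ 3 ∂P) * (∫ ω, ε ω ∂P) + (∫ ω, Z ω ^ 2 ∂P) * ∫ ω, ε ω ^ 2 ∂P := by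
  simp only [gcmStat_sq_eq_sum]
  rw [hind.integral_sum_mul_pow_mul_pow hZ hε (by decide) (by decide)]
  simp [Fin.sum_univ_succ]
  ring

lemma memLp_gcmStat (hind : IndepFun Z ε P) (hZ : MemLp Z 4 P) (hε : MemLp ε 2 P) (β : ℝ) :
    MemLp (gcmStat β Z ε) 2 P := by
  refine (memLp_two_iff_integrable_sq ?_).2 ?_
  · exact hZ.1.mul ((hZ.1.const_mul β).add hε.1)
  · simp only [gcmStat_sq_eq_sum]
    exact hind.integrable_sum_mul_pow_mul_pow hZ hε (by decide) (by decide)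

lemma variance_gcmStat (hind : IndepFun Z ε P) (hZ : MemLp Z 4 P) (hε : MemLp ε 2 P) (β : ℝ) :
    Var[gcmStat β Z ε; P] = β ^ 2 * ∫ ω, Z ω ^ 4 ∂P
      + 2 * β * (∫ ω, Z ω ^ 3 ∂P) * (∫ ω, ε ω ∂P) + (∫ ω, Z ω ^ 2 ∂P) * ∫ ω, ε ω ^ 2 ∂P
      - (β * ∫ ω, Z ω ^ 2 ∂P + (∫ ω, Z ω ∂P) * ∫ ω, ε ω ∂P) ^ 2 := by
  rw [variance_eq_sub (memLp_gcmStat hind hZ hε β), ← integral_gcmStat hind hZ hε,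
    ← integral_gcmStat_sq hind hZ hε]
  rfl

section Gaussian

variable {v : ℝ≥0}

lemma integral_gcmStat_of_hasLaw_gaussianReal (hZ : HasLaw Z (gaussianReal 0 v) P)
    (hind : IndepFun Z ε P) (hε : MemLp ε 2 P) (β : ℝ) :
    ∫ ω, gcmStat β Z ε ω ∂P = β * v := by
  rw [integral_gcmStat hind (hZ.memLp_of_gaussianReal 4) hε, hZ.integral_pow_two_gaussianReal,
    hZ.integral_eq, integral_id_gaussianReal, zero_mul, add_zero]

lemma variance_gcmStat_of_hasLaw_gaussianReal (hZ : HasLaw Z (gaussianReal 0 v) P)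
    (hind : IndepFun Z ε P) (hε : MemLp ε 2 P) (β : ℝ) :
    Var[gcmStat β Z ε; P] = 2 * β ^ 2 * v ^ 2 + v * ∫ ω, ε ω ^ 2 ∂P := by
  rw [variance_gcmStat hind (hZ.memLp_of_gaussianReal 4) hε, hZ.integral_eq,
    integral_id_gaussianReal, hZ.integral_pow_two_gaussianReal, hZ.integral_pow_three_gaussianReal,
    hZ.integral_pow_four_gaussianReal]
  ring

end Gaussian

end ProbabilityTheory

theorem are_gaussian_example_general
    {Ω : Type*} {mΩ : MeasurableSpace Ω} {P : Measure Ω} [IsProbabilityMeasure P]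
    (Z ε : Ω → ℝ) (τ σε2 β : ℝ)
    (hτ : 0 < τ) (hβ : β ≠ 0)
    (hZ : Measurable Z)
    (hZlaw : Measure.map Z P = gaussianReal 0 (⟨τ ^ 2, sq_nonneg τ⟩ : NNReal))
    (hindep : IndepFun Z ε P)
    (hε2mem : MemLp ε 2 P)
    (hε2 : ∫ ω, (ε ω) ^ 2 ∂P = σε2)
    (T₁ T₂ : Ω → ℝ)
    (hT₁ : T₁ = fun ω => Z ω * (β * Z ω + ε ω))
    (hT₂ : T₂ = fun ω => (β * Z ω + ε ω) ^ 2 - (ε ω) ^ 2) :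
    (∫ ω, T₁ ω ∂P) = β * τ ^ 2
    ∧ variance T₁ P = 2 * β ^ 2 * τ ^ 4 + σε2 * τ ^ 2
    ∧ (∫ ω, T₂ ω ∂P) = β ^ 2 * τ ^ 2
    ∧ variance T₂ P = 2 * β ^ 4 * τ ^ 4 + 4 * σε2 * β ^ 2 * τ ^ 2
    ∧ (variance T₂ P / (∫ ω, T₂ ω ∂P) ^ 2) / (variance T₁ P / (∫ ω, T₁ ω ∂P) ^ 2)
        = (4 * σε2 / β ^ 2 + 2 * τ ^ 2) / (σε2 / β ^ 2 + 2 * τ ^ 2) := by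
  set v : ℝ≥0 := ⟨τ ^ 2, sq_nonneg τ⟩
  have hv : (v : ℝ) = τ ^ 2 := rfl
  have hZ' : HasLaw Z (gaussianReal 0 v) P := ⟨hZ.aemeasurable, hZlaw⟩
  have hT₁gcm : T₁ = gcmStat β Z ε := hT₁
  have hT₂gcm : T₂ = fun ω ↦ β * gcmStat β Z (fun ω ↦ 2 * ε ω) ω := by
    rw [hT₂]; ext ω; simp only [gcmStat]; ring
  have hind₂ : IndepFun Z (fun ω ↦ 2 * ε ω) P := hindep.comp measurable_id (measurable_const_mul 2)
  have hε₂ : MemLp (fun ω ↦ 2 * ε ω) 2 P := hε2mem.const_mul 2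
  have E₁ : ∫ ω, T₁ ω ∂P = β * τ ^ 2 := by
    rw [hT₁gcm, integral_gcmStat_of_hasLaw_gaussianReal hZ' hindep hε2mem, hv]
  have V₁ : Var[T₁; P] = 2 * β ^ 2 * τ ^ 4 + σε2 * τ ^ 2 := by
    rw [hT₁gcm, variance_gcmStat_of_hasLaw_gaussianReal hZ' hindep hε2mem, hε2, hv]
    ring
  have E₂ : ∫ ω, T₂ ω ∂P = β ^ 2 * τ ^ 2 := by
    rw [hT₂gcm, integral_const_mul, integral_gcmStat_of_hasLaw_gaussianReal hZ' hind₂ hε₂, hv]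
    ring
  have V₂ : Var[T₂; P] = 2 * β ^ 4 * τ ^ 4 + 4 * σε2 * β ^ 2 * τ ^ 2 := by
    rw [hT₂gcm, variance_const_mul, variance_gcmStat_of_hasLaw_gaussianReal hZ' hind₂ hε₂]
    simp only [mul_pow, integral_const_mul, hε2, hv]
    ring
  refine ⟨E₁, V₁, E₂, V₂, ?_⟩
  rw [E₁, V₁, E₂, V₂]
  field_simp
  ring

/-- Example 1: closed-form asymptotic relative efficiency with a Gaussian residual
`Z ∼ N(0, τ²)`, for the GCM statistic `T₁ = Z(βZ + ε)` and the LOCO statistic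
`T₂ = (βZ + ε)² − ε²`. -/
theorem are_gaussian_example
    {Ω : Type*} {mΩ : MeasurableSpace Ω} {P : Measure Ω} [IsProbabilityMeasure P]
    (Z ε : Ω → ℝ) (τ σε2 β : ℝ)
    (hτ : 0 < τ) (hσε2 : 0 < σε2) (hβ : β ≠ 0)
    (hZ : Measurable Z) (hεmeas : Measurable ε)
    (hZlaw : Measure.map Z P = gaussianReal 0 (⟨τ ^ 2, sq_nonneg τ⟩ : NNReal))
    (hindep : IndepFun Z ε P)
    (hε0 : ∫ ω, ε ω ∂P = 0) (hε2mem : MemLp ε 2 P)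
    (hε2 : ∫ ω, (ε ω) ^ 2 ∂P = σε2)
    (T₁ T₂ : Ω → ℝ)
    (hT₁ : T₁ = fun ω => Z ω * (β * Z ω + ε ω))
    (hT₂ : T₂ = fun ω => (β * Z ω + ε ω) ^ 2 - (ε ω) ^ 2) :
    (∫ ω, T₁ ω ∂P) = β * τ ^ 2
    ∧ variance T₁ P = 2 * β ^ 2 * τ ^ 4 + σε2 * τ ^ 2
    ∧ (∫ ω, T₂ ω ∂P) = β ^ 2 * τ ^ 2
    ∧ variance T₂ P = 2 * β ^ 4 * τ ^ 4 + 4 * σε2 * β ^ 2 * τ ^ 2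
    ∧ (variance T₂ P / (∫ ω, T₂ ω ∂P) ^ 2) / (variance T₁ P / (∫ ω, T₁ ω ∂P) ^ 2)
        = (4 * σε2 / β ^ 2 + 2 * τ ^ 2) / (σε2 / β ^ 2 + 2 * τ ^ 2) :=
  are_gaussian_example_general (mΩ := mΩ) Z ε τ σε2 β hτ hβ hZ hZlaw hindep hε2mem hε2 T₁ T₂ hT₁ hT₂
end
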